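/- arXiv:1910.02141 — 3 statements merged into one kernel-verified Lean document; each statement's English description precedes it below -/
import Mathlib

section
/- Let T > 0, 0 < α < 1, N ∈ ℕ, and let β₀, β₁, …, β_N and τ₁, …, τ_N be positive reals. Let f : [0,T] → ℝ be twice continuously differentiable. With D_t^α f, D̂_t^α f and ε as below, for every t ∈ [0,T]: | D_t^α f − D̂_t^α f | ≤ ( sup_{z ∈ [0,T]} |ε(z)| ) · ( |f′(0)| + ∫₀ᵀ |f″(s)| ds ). -/
open MeasureTheory intervalIntegral Real Set

/-!
Integrating each Prony term by parts turns `D̂_t^α f` into the shape of the Caputo derivative,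
`K̂(t) f'(0) + ∫₀ᵗ K̂(t-s) f''(s) ds`, with kernel `K̂(z) = β₀ + Σ β_k τ_k (1 - exp(-z/τ_k))`
in place of `z^{1-α}/Γ(2-α)`. As `ε` is the difference of the two kernels,
`D_t^α f - D̂_t^α f = ε(t) f'(0) + ∫₀ᵗ ε(t-s) f''(s) ds`, and it remains to bound `|ε|` by its
supremum over `[0, T]`.
-/

theorem ContDiffOn.hasDerivAt_derivWithin_Icc {g : ℝ → ℝ} {a b s : ℝ}
    (hg : ContDiffOn ℝ 1 g (Icc a b)) (hs : s ∈ Ioo a b) :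
    HasDerivAt g (derivWithin g (Icc a b) s) s :=
  ((hg.differentiableOn one_ne_zero) s (Ioo_subset_Icc_self hs)).hasDerivWithinAt.hasDerivAt
    (Icc_mem_nhds hs.1 hs.2)

theorem integral_comp_sub_mul_deriv_eq_deriv_mul {K K' u u' : ℝ → ℝ} {t : ℝ} (ht : 0 ≤ t)
    (hK : ∀ z, HasDerivAt K (K' z) z) (hK' : Continuous K')
    (hu : ContinuousOn u (Icc 0 t)) (hu' : ∀ s ∈ Ioo 0 t, HasDerivAt u (u' s) s)
    (hu'_int : IntervalIntegrable u' volume 0 t) :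
    ∫ s in (0 : ℝ)..t, K (t - s) * u' s =
      K 0 * u t - K t * u 0 + ∫ s in (0 : ℝ)..t, K' (t - s) * u s := by
  have hKc : Continuous K := continuous_iff_continuousAt.2 fun z ↦ (hK z).continuousAt
  have hv' : ∀ s ∈ Ioo (min 0 t) (max 0 t), HasDerivAt u (u' s) s := by
    simpa [min_eq_left ht, max_eq_right ht] using hu'
  rw [integral_mul_deriv_eq_deriv_mul_of_hasDerivAt (u' := fun s ↦ -K' (t - s))
    (by fun_prop) (by rwa [uIcc_of_le ht]) (fun s _ ↦ (hK (t - s)).comp_const_sub t s) hv'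
    ((by fun_prop : Continuous fun s ↦ -K' (t - s)).intervalIntegrable _ _) hu'_int]
  simp only [neg_mul, intervalIntegral.integral_neg, sub_self, sub_zero, sub_neg_eq_add]

noncomputable def kernelIntegral (K u u' : ℝ → ℝ) (t : ℝ) : ℝ :=
  K t * u 0 + ∫ s in (0 : ℝ)..t, K (t - s) * u' s

theorem kernelIntegral_const_mul_sub {K₁ K₂ u u' : ℝ → ℝ} {t : ℝ} (c : ℝ) (ht : 0 ≤ t)
    (hK₁ : Continuous K₁) (hK₂ : Continuous K₂) (hu' : ContinuousOn u' (Icc 0 t)) :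
    kernelIntegral (fun z ↦ c * K₁ z - K₂ z) u u' t =
      c * kernelIntegral K₁ u u' t - kernelIntegral K₂ u u' t := by
  have h_int : ∀ K : ℝ → ℝ, Continuous K →
      IntervalIntegrable (fun s ↦ K (t - s) * u' s) volume 0 t := fun K hK ↦
    ((hK.comp (continuous_sub_left t)).continuousOn.mul hu').intervalIntegrable_of_Icc ht
  have h_eq : ∫ s in (0 : ℝ)..t, (c * K₁ (t - s) - K₂ (t - s)) * u' s =
      c * (∫ s in (0 : ℝ)..t, K₁ (t - s) * u' s) - ∫ s in (0 : ℝ)..t, K₂ (t - s) * u' s := by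
    rw [← intervalIntegral.integral_const_mul,
      ← intervalIntegral.integral_sub ((h_int K₁ hK₁).const_mul c) (h_int K₂ hK₂)]
    exact intervalIntegral.integral_congr fun s _ ↦ by ring
  simp only [kernelIntegral, h_eq]
  ring

noncomputable def pronyKernel {ι : Type*} (s : Finset ι) (β₀ : ℝ) (β τ : ι → ℝ) (z : ℝ) : ℝ :=
  β₀ + ∑ k ∈ s, β k * τ k * (1 - exp (-z / τ k))

section Prony

variable {ι : Type*} (s : Finset ι) (β₀ : ℝ) (β τ : ι → ℝ)

theorem pronyKernel_zero : pronyKernel s β₀ β τ 0 = β₀ := by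
  simp [pronyKernel]

theorem hasDerivAt_pronyKernel (hτ : ∀ k ∈ s, τ k ≠ 0) (z : ℝ) :
    HasDerivAt (pronyKernel s β₀ β τ) (∑ k ∈ s, β k * exp (-z / τ k)) z := by
  refine (HasDerivAt.fun_sum fun k hk ↦ ?_).const_add β₀
  have h := (((hasDerivAt_neg z).div_const (τ k)).exp.const_sub 1).const_mul (β k * τ k)
  rwa [show β k * τ k * -(exp (-z / τ k) * (-1 / τ k)) = β k * exp (-z / τ k) by
    field_simp [hτ k hk]] at h

theorem continuous_pronyKernel (hτ : ∀ k ∈ s, τ k ≠ 0) : Continuous (pronyKernel s β₀ β τ) :=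
  continuous_iff_continuousAt.2 fun z ↦ (hasDerivAt_pronyKernel s β₀ β τ hτ z).continuousAt

theorem prony_eq_kernelIntegral (hτ : ∀ k ∈ s, τ k ≠ 0) {u u' : ℝ → ℝ} {t : ℝ}
    (ht : 0 ≤ t) (hu : ContinuousOn u (Icc 0 t)) (hu' : ∀ x ∈ Ioo 0 t, HasDerivAt u (u' x) x)
    (hu'_int : IntervalIntegrable u' volume 0 t) :
    β₀ * u t + ∑ k ∈ s, ∫ x in (0 : ℝ)..t, β k * exp ((x - t) / τ k) * u x =
      kernelIntegral (pronyKernel s β₀ β τ) u u' t := by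
  rw [kernelIntegral, integral_comp_sub_mul_deriv_eq_deriv_mul ht
    (hasDerivAt_pronyKernel s β₀ β τ hτ) (by fun_prop) hu hu' hu'_int, pronyKernel_zero,
    ← intervalIntegral.integral_finsetSum]
  · simp_rw [Finset.sum_mul, neg_sub]
    ring
  · intro k _
    exact ((by fun_prop : Continuous fun x ↦ β k * exp ((x - t) / τ k)).continuousOn.mul
      hu).intervalIntegrable_of_Icc ht

end Prony

theorem abs_kernelIntegral_le {ε u u' : ℝ → ℝ} {T t M : ℝ} (ht : t ∈ Icc 0 T)
    (hε : ContinuousOn ε (Icc 0 T)) (hu' : ContinuousOn u' (Icc 0 T))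
    (hM : ∀ z ∈ Icc 0 T, |ε z| ≤ M) :
    |kernelIntegral ε u u' t| ≤ M * (|u 0| + ∫ s in (0 : ℝ)..T, |u' s|) := by
  obtain ⟨ht0, htT⟩ := ht
  have hM0 : 0 ≤ M := (abs_nonneg _).trans (hM t ⟨ht0, htT⟩)
  have hsub : Icc 0 t ⊆ Icc 0 T := Icc_subset_Icc_right htT
  have hεu' : ContinuousOn (fun s ↦ ε (t - s) * u' s) (Icc 0 t) := by
    refine (hε.comp (by fun_prop) fun s hs ↦ ?_).mul (hu'.mono hsub)
    exact ⟨by linarith [hs.2], by linarith [hs.1]⟩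
  have h_int : |∫ s in (0 : ℝ)..t, ε (t - s) * u' s| ≤ M * ∫ s in (0 : ℝ)..t, |u' s| := by
    rw [← intervalIntegral.integral_const_mul]
    refine (abs_integral_le_integral_abs ht0).trans (integral_mono_on ht0
      (hεu'.abs.intervalIntegrable_of_Icc ht0)
      ((continuousOn_const.mul (hu'.mono hsub).abs).intervalIntegrable_of_Icc ht0) fun s hs ↦ ?_)
    rw [abs_mul]
    exact mul_le_mul_of_nonneg_right (hM _ ⟨by linarith [hs.2], by linarith [hs.1]⟩)
      (abs_nonneg _)
  have h_mono : ∫ s in (0 : ℝ)..t, |u' s| ≤ ∫ s in (0 : ℝ)..T, |u' s| :=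
    integral_mono_interval le_rfl ht0 htT (Filter.Eventually.of_forall fun _ ↦ abs_nonneg _)
      (hu'.abs.intervalIntegrable_of_Icc (ht0.trans htT))
  calc |kernelIntegral ε u u' t|
      ≤ M * |u 0| + M * ∫ s in (0 : ℝ)..t, |u' s| := by
        refine (abs_add_le _ _).trans (add_le_add ?_ h_int)
        rw [abs_mul]
        exact mul_le_mul_of_nonneg_right (hM t ⟨ht0, htT⟩) (abs_nonneg (u 0))
    _ ≤ M * (|u 0| + ∫ s in (0 : ℝ)..T, |u' s|) := by
        rw [mul_add]
        exact add_le_add_right (mul_le_mul_of_nonneg_left h_mono hM0) _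

theorem prony_error_bound_general (T α : ℝ) (hT : 0 < T) (hα1 : α < 1)
    (N : ℕ) (β0 : ℝ) (β τ : ℕ → ℝ)
    (hτ : ∀ k ∈ Finset.Icc 1 N, 0 < τ k)
    (f : ℝ → ℝ) (hf : ContDiffOn ℝ 2 f (Set.Icc 0 T))
    (f' f'' : ℝ → ℝ)
    (hf' : f' = derivWithin f (Set.Icc 0 T))
    (hf'' : f'' = derivWithin f' (Set.Icc 0 T))
    (D : ℝ → ℝ)
    (hD : ∀ t, D t = (1 / Real.Gamma (2 - α)) *
      (t ^ (1 - α) * f' 0 + ∫ s in (0 : ℝ)..t, (t - s) ^ (1 - α) * f'' s))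
    (Dhat : ℝ → ℝ)
    (hDhat : ∀ t, Dhat t = β0 * f' t +
      ∑ k ∈ Finset.Icc 1 N, ∫ s in (0 : ℝ)..t, β k * Real.exp ((s - t) / τ k) * f' s)
    (ε : ℝ → ℝ)
    (hε : ∀ z, ε z = z ^ (1 - α) / Real.Gamma (2 - α) - β0 +
      ∑ k ∈ Finset.Icc 1 N, β k * τ k * (Real.exp (-z / τ k) - 1)) :
    ∀ t ∈ Set.Icc (0 : ℝ) T,
      |D t - Dhat t| ≤
        sSup ((fun z => |ε z|) '' Set.Icc 0 T) *
          (|f' 0| + ∫ s in (0 : ℝ)..T, |f'' s|) := by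
  rintro t ⟨ht0, htT⟩
  have hτ₀ : ∀ k ∈ Finset.Icc 1 N, τ k ≠ 0 := fun k hk ↦ (hτ k hk).ne'
  set K := pronyKernel (Finset.Icc 1 N) β0 β τ
  have hK : Continuous K := continuous_pronyKernel _ _ _ _ hτ₀
  have hrpow : Continuous fun z : ℝ ↦ z ^ (1 - α) := continuous_rpow_const (by linarith)
  have hf1 : ContDiffOn ℝ 1 f' (Icc 0 T) := hf' ▸ hf.derivWithin (uniqueDiffOn_Icc hT) le_rfl
  have hf''c : ContinuousOn f'' (Icc 0 T) :=
    hf'' ▸ hf1.continuousOn_derivWithin (uniqueDiffOn_Icc hT) le_rfl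
  have hsub : Icc 0 t ⊆ Icc 0 T := Icc_subset_Icc_right htT
  have hε_eq : ε = fun z ↦ 1 / Gamma (2 - α) * z ^ (1 - α) - K z := by
    ext z
    simp only [hε, K, pronyKernel, mul_sub, Finset.sum_sub_distrib, mul_one]
    ring
  have hDhat_eq : Dhat t = kernelIntegral K f' f'' t :=
    hDhat t ▸ prony_eq_kernelIntegral _ _ _ _ hτ₀ ht0 (hf1.continuousOn.mono hsub)
      (fun s hs ↦ hf'' ▸ hf1.hasDerivAt_derivWithin_Icc ⟨hs.1, hs.2.trans_le htT⟩)
      ((hf''c.mono hsub).intervalIntegrable_of_Icc ht0)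
  have key : D t - Dhat t = kernelIntegral ε f' f'' t := by
    rw [hD t, hDhat_eq, hε_eq, kernelIntegral_const_mul_sub _ ht0 hrpow hK (hf''c.mono hsub)]
    rfl
  have hεc : Continuous ε := hε_eq ▸ (continuous_const.mul hrpow).sub hK
  have hbdd := isCompact_Icc.bddAbove_image (f := fun z ↦ |ε z|) (K := Icc 0 T)
    hεc.abs.continuousOn
  exact key ▸ abs_kernelIntegral_le ⟨ht0, htT⟩ hεc.continuousOn hf''c
    fun z hz ↦ le_csSup hbdd ⟨z, hz, rfl⟩

/-- Sup-norm error bound for the Prony approximation of the Caputo fractional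
derivative (Lemma 1). -/
theorem prony_error_bound (T α : ℝ) (hT : 0 < T) (hα0 : 0 < α) (hα1 : α < 1)
    (N : ℕ) (β0 : ℝ) (hβ0 : 0 < β0) (β τ : ℕ → ℝ)
    (hβ : ∀ k ∈ Finset.Icc 1 N, 0 < β k) (hτ : ∀ k ∈ Finset.Icc 1 N, 0 < τ k)
    (f : ℝ → ℝ) (hf : ContDiffOn ℝ 2 f (Set.Icc 0 T))
    (f' f'' : ℝ → ℝ)
    (hf' : f' = derivWithin f (Set.Icc 0 T))
    (hf'' : f'' = derivWithin f' (Set.Icc 0 T))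
    (D : ℝ → ℝ)
    (hD : ∀ t, D t = (1 / Real.Gamma (2 - α)) *
      (t ^ (1 - α) * f' 0 + ∫ s in (0 : ℝ)..t, (t - s) ^ (1 - α) * f'' s))
    (Dhat : ℝ → ℝ)
    (hDhat : ∀ t, Dhat t = β0 * f' t +
      ∑ k ∈ Finset.Icc 1 N, ∫ s in (0 : ℝ)..t, β k * Real.exp ((s - t) / τ k) * f' s)
    (ε : ℝ → ℝ)
    (hε : ∀ z, ε z = z ^ (1 - α) / Real.Gamma (2 - α) - β0 +
      ∑ k ∈ Finset.Icc 1 N, β k * τ k * (Real.exp (-z / τ k) - 1)) :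
    ∀ t ∈ Set.Icc (0 : ℝ) T,
      |D t - Dhat t| ≤
        sSup ((fun z => |ε z|) '' Set.Icc 0 T) *
          (|f' 0| + ∫ s in (0 : ℝ)..T, |f'' s|) :=
  prony_error_bound_general T α hT hα1 N β0 β τ hτ f hf f' f'' hf' hf'' D hD Dhat hDhat ε hε
end

section
/- Let T > 0, 0 < α < 1, N ∈ ℕ, and let β₀, β₁, …, β_N and τ₁, …, τ_N be positive reals. Let f : [0,T] → ℝ be twice continuously differentiable with f′(0) = 0. With D_t^α f, D̂_t^α f and ε as below, for every t ∈ [0,T]: | D_t^α f − D̂_t^α f | ≤ ( ∫₀ᵀ ε(z)² dz )^{1/2} · ( ∫₀ᵀ f″(s)² ds )^{1/2}. -/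
open MeasureTheory intervalIntegral Real Set

/-! Integrating each exponential mode by parts against the antiderivative
`τ (exp ((s - t) / τ) - 1)`, which vanishes at `s = t`, produces no boundary terms because
`f' 0 = 0`; together with `f' t = ∫₀ᵗ f''` this writes `D t - D̂ t` as the convolution
`∫₀ᵗ ε (t - s) f'' s ds`. Cauchy–Schwarz on `[0, t]` and enlarging the interval to `[0, T]`
give the bound. -/

theorem abs_integral_mul_le_sqrt_mul_sqrt {X : Type*} [MeasurableSpace X] {μ : Measure X}
    {g h : X → ℝ} (hg : MemLp g 2 μ) (hh : MemLp h 2 μ) :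
    |∫ x, g x * h x ∂μ| ≤ √(∫ x, g x ^ 2 ∂μ) * √(∫ x, h x ^ 2 ∂μ) := by
  have hofReal : ENNReal.ofReal 2 = 2 := by norm_num
  have holder := integral_mul_norm_le_Lp_mul_Lq Real.HolderConjugate.two_two
    (hofReal ▸ hg) (hofReal ▸ hh)
  simp only [norm_eq_abs, rpow_two, sq_abs, ← sqrt_eq_rpow] at holder
  calc |∫ x, g x * h x ∂μ| ≤ ∫ x, |g x| * |h x| ∂μ := by
        simpa only [← abs_mul] using MeasureTheory.abs_integral_le_integral_abs
    _ ≤ _ := holder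

theorem abs_intervalIntegral_mul_le_sqrt_mul_sqrt {a b : ℝ} (hab : a ≤ b) {g h : ℝ → ℝ}
    (hg : ContinuousOn g (Icc a b)) (hh : ContinuousOn h (Icc a b)) :
    |∫ s in a..b, g s * h s| ≤ √(∫ s in a..b, g s ^ 2) * √(∫ s in a..b, h s ^ 2) := by
  have memLp_two {φ : ℝ → ℝ} (hφ : ContinuousOn φ (Icc a b)) :
      MemLp φ 2 (volume.restrict (Ioc a b)) :=
    (memLp_two_iff_integrable_sq
      ((hφ.mono Ioc_subset_Icc_self).aestronglyMeasurable measurableSet_Ioc)).2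
      ((hφ.pow 2).integrableOn_Icc.mono_set Ioc_subset_Icc_self)
  simp only [integral_of_le hab]
  exact abs_integral_mul_le_sqrt_mul_sqrt (memLp_two hg) (memLp_two hh)

theorem abs_intervalIntegral_comp_sub_mul_le {T t : ℝ} (ht : t ∈ Icc 0 T) {g h : ℝ → ℝ}
    (hg : ContinuousOn g (Icc 0 T)) (hh : ContinuousOn h (Icc 0 T)) :
    |∫ s in 0..t, g (t - s) * h s| ≤
      √(∫ z in 0..T, g z ^ 2) * √(∫ s in 0..T, h s ^ 2) := by
  obtain ⟨ht0, htT⟩ := ht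
  have hsub : Icc 0 t ⊆ Icc 0 T := Icc_subset_Icc_right htT
  have hreflect : ContinuousOn (fun s => g (t - s)) (Icc 0 t) :=
    (hg.mono hsub).comp (continuousOn_const.sub continuousOn_id) fun s hs =>
      ⟨by linarith [hs.2], by linarith [hs.1]⟩
  have sq_integral_le {φ : ℝ → ℝ} (hφ : ContinuousOn φ (Icc 0 T)) :
      ∫ s in 0..t, φ s ^ 2 ≤ ∫ s in 0..T, φ s ^ 2 :=
    integral_mono_interval le_rfl ht0 htT (.of_forall fun _ => sq_nonneg _)
      ((hφ.pow 2).intervalIntegrable_of_Icc (ht0.trans htT))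
  have hreflect_sq : ∫ s in 0..t, g (t - s) ^ 2 = ∫ z in 0..t, g z ^ 2 := by
    simpa using integral_comp_sub_left (a := 0) (b := t) (fun z => g z ^ 2) t
  calc |∫ s in 0..t, g (t - s) * h s|
      ≤ √(∫ s in 0..t, g (t - s) ^ 2) * √(∫ s in 0..t, h s ^ 2) :=
        abs_intervalIntegral_mul_le_sqrt_mul_sqrt ht0 hreflect (hh.mono hsub)
    _ ≤ _ := by
        rw [hreflect_sq]
        gcongr
        exacts [sq_integral_le hg, sq_integral_le hh]

noncomputable section

def caputoDeriv (α : ℝ) (f' f'' : ℝ → ℝ) (t : ℝ) : ℝ :=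
  (1 / Gamma (2 - α)) * (t ^ (1 - α) * f' 0 + ∫ s in 0..t, (t - s) ^ (1 - α) * f'' s)

def pronyDeriv (N : ℕ) (β0 : ℝ) (β τ : ℕ → ℝ) (f' : ℝ → ℝ) (t : ℝ) : ℝ :=
  β0 * f' t + ∑ k ∈ Finset.Icc 1 N, ∫ s in 0..t, β k * exp ((s - t) / τ k) * f' s

def pronyError (α : ℝ) (N : ℕ) (β0 : ℝ) (β τ : ℕ → ℝ) (z : ℝ) : ℝ :=
  z ^ (1 - α) / Gamma (2 - α) - β0 +
    ∑ k ∈ Finset.Icc 1 N, β k * τ k * (exp (-z / τ k) - 1)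

end

theorem continuous_pronyError {α : ℝ} (hα : α ≤ 1) (N : ℕ) (β0 : ℝ) (β τ : ℕ → ℝ) :
    Continuous (pronyError α N β0 β τ) := by
  have := Real.continuous_rpow_const (sub_nonneg.2 hα)
  unfold pronyError
  fun_prop

section

variable {u u' : ℝ → ℝ} {t : ℝ}

theorem integral_exp_mul_eq_neg_integral {τ : ℝ} (hτ : τ ≠ 0) (ht : 0 ≤ t)
    (hu : ContinuousOn u (Icc 0 t)) (hu' : ∀ s ∈ Ioo 0 t, HasDerivAt u (u' s) s)
    (hu'i : IntervalIntegrable u' volume 0 t) (hu0 : u 0 = 0) :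
    ∫ s in 0..t, exp ((s - t) / τ) * u s =
      -∫ s in 0..t, τ * (exp ((s - t) / τ) - 1) * u' s := by
  have hv : ∀ s, HasDerivAt (fun s => τ * (exp ((s - t) / τ) - 1)) (exp ((s - t) / τ)) s :=
    fun s => by
      refine (((((hasDerivAt_id' s).sub_const t).div_const τ).exp.sub_const 1).const_mul
        τ).congr_deriv ?_
      field_simp
  have hexp : Continuous fun s => exp ((s - t) / τ) := by fun_prop
  have ibp := integral_mul_deriv_eq_deriv_mul_of_hasDerivAt
    (by rwa [uIcc_of_le ht]) (fun s _ => (hv s).continuousAt.continuousWithinAt)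
    (by rwa [min_eq_left ht, max_eq_right ht]) (fun s _ => hv s) hu'i
    (hexp.intervalIntegrable 0 t)
  simp only [sub_self, zero_div, exp_zero, mul_zero, hu0, zero_mul, zero_sub] at ibp
  simpa only [mul_comm] using ibp

theorem caputoDeriv_sub_pronyDeriv_eq_integral {α : ℝ} (hα : α ≤ 1) {N : ℕ} {β0 : ℝ}
    {β τ : ℕ → ℝ} (hτ : ∀ k ∈ Finset.Icc 1 N, τ k ≠ 0) (ht : 0 ≤ t)
    (hu : ContinuousOn u (Icc 0 t)) (hu' : ∀ s ∈ Ioo 0 t, HasDerivAt u (u' s) s)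
    (hu'i : IntervalIntegrable u' volume 0 t) (hu0 : u 0 = 0) :
    caputoDeriv α u u' t - pronyDeriv N β0 β τ u t =
      ∫ s in 0..t, pronyError α N β0 β τ (t - s) * u' s := by
  have hint {φ : ℝ → ℝ} (hφ : Continuous φ) :
      IntervalIntegrable (fun s => φ s * u' s) volume 0 t :=
    hu'i.continuousOn_mul hφ.continuousOn
  have hrpow : Continuous fun s : ℝ => (t - s) ^ (1 - α) / Gamma (2 - α) := by
    have := Real.continuous_rpow_const (sub_nonneg.2 hα)
    fun_prop
  have hcaputo :
      caputoDeriv α u u' t = ∫ s in 0..t, (t - s) ^ (1 - α) / Gamma (2 - α) * u' s := by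
    rw [caputoDeriv, hu0, mul_zero, zero_add, ← intervalIntegral.integral_const_mul]
    congr 1 with s
    ring
  have hβ0 : β0 * u t = ∫ s in 0..t, β0 * u' s := by
    rw [intervalIntegral.integral_const_mul,
      integral_eq_sub_of_hasDerivAt_of_le ht hu hu' hu'i, hu0, sub_zero]
  have hmode : ∀ k ∈ Finset.Icc 1 N, ∫ s in 0..t, β k * exp ((s - t) / τ k) * u s =
      -∫ s in 0..t, β k * τ k * (exp (-(t - s) / τ k) - 1) * u' s := fun k hk => by
    calc ∫ s in 0..t, β k * exp ((s - t) / τ k) * u s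
        = β k * ∫ s in 0..t, exp ((s - t) / τ k) * u s := by
          simp only [mul_assoc, intervalIntegral.integral_const_mul]
      _ = β k * -∫ s in 0..t, τ k * (exp ((s - t) / τ k) - 1) * u' s := by
          rw [integral_exp_mul_eq_neg_integral (hτ k hk) ht hu hu' hu'i hu0]
      _ = _ := by
          simp only [neg_sub, mul_neg, ← intervalIntegral.integral_const_mul, mul_assoc]
  have hsplit : ∀ s, pronyError α N β0 β τ (t - s) * u' s =
      (t - s) ^ (1 - α) / Gamma (2 - α) * u' s - β0 * u' s +
        ∑ k ∈ Finset.Icc 1 N, β k * τ k * (exp (-(t - s) / τ k) - 1) * u' s := fun s => by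
    simp only [pronyError, add_mul, sub_mul, Finset.sum_mul]
  rw [integral_congr fun s _ => hsplit s, intervalIntegral.integral_add,
    intervalIntegral.integral_sub, intervalIntegral.integral_finsetSum, ← hcaputo, ← hβ0,
    pronyDeriv, Finset.sum_congr rfl hmode, Finset.sum_neg_distrib, sub_add_eq_sub_sub,
    sub_neg_eq_add]
  · exact fun k _ => hint (by fun_prop)
  · exact hint hrpow
  · exact hint continuous_const
  · exact (hint hrpow).sub (hint continuous_const)
  · simp only [← Finset.sum_mul]
    exact hint (by fun_prop)

theorem prony_error_bound_L2_general (T α : ℝ) (hT : 0 < T) (hα1 : α < 1)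
    (N : ℕ) (β0 : ℝ) (β τ : ℕ → ℝ)
    (hτ : ∀ k ∈ Finset.Icc 1 N, 0 < τ k)
    (f : ℝ → ℝ) (hf : ContDiffOn ℝ 2 f (Set.Icc 0 T))
    (f' f'' : ℝ → ℝ)
    (hf' : f' = derivWithin f (Set.Icc 0 T))
    (hf'' : f'' = derivWithin f' (Set.Icc 0 T))
    (hf'0 : f' 0 = 0)
    (D : ℝ → ℝ)
    (hD : ∀ t, D t = (1 / Real.Gamma (2 - α)) *
      (t ^ (1 - α) * f' 0 + ∫ s in (0 : ℝ)..t, (t - s) ^ (1 - α) * f'' s))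
    (Dhat : ℝ → ℝ)
    (hDhat : ∀ t, Dhat t = β0 * f' t +
      ∑ k ∈ Finset.Icc 1 N, ∫ s in (0 : ℝ)..t, β k * Real.exp ((s - t) / τ k) * f' s)
    (ε : ℝ → ℝ)
    (hε : ∀ z, ε z = z ^ (1 - α) / Real.Gamma (2 - α) - β0 +
      ∑ k ∈ Finset.Icc 1 N, β k * τ k * (Real.exp (-z / τ k) - 1)) :
    ∀ t ∈ Set.Icc (0 : ℝ) T,
      |D t - Dhat t| ≤
        Real.sqrt (∫ z in (0 : ℝ)..T, (ε z) ^ 2) *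
          Real.sqrt (∫ s in (0 : ℝ)..T, (f'' s) ^ 2) := by
  intro t ht
  have hud : UniqueDiffOn ℝ (Icc 0 T) := uniqueDiffOn_Icc hT
  have hf'C1 : ContDiffOn ℝ 1 f' (Icc 0 T) := hf' ▸ hf.derivWithin hud (by norm_num)
  have hf''cont : ContinuousOn f'' (Icc 0 T) :=
    hf'' ▸ hf'C1.continuousOn_derivWithin hud le_rfl
  have hf'f'' : ∀ s ∈ Ioo 0 T, HasDerivAt f' (f'' s) s := fun s hs => hf'' ▸
    (hf'C1.differentiableOn one_ne_zero s (Ioo_subset_Icc_self hs)).hasDerivWithinAt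
      |>.hasDerivAt (Icc_mem_nhds hs.1 hs.2)
  have hsub : Icc 0 t ⊆ Icc 0 T := Icc_subset_Icc_right ht.2
  have hrepr : D t - Dhat t = ∫ s in 0..t, pronyError α N β0 β τ (t - s) * f'' s := by
    rw [hD, hDhat]
    exact caputoDeriv_sub_pronyDeriv_eq_integral hα1.le (fun k hk => (hτ k hk).ne') ht.1
      (hf'C1.continuousOn.mono hsub) (fun s hs => hf'f'' s ⟨hs.1, hs.2.trans_le ht.2⟩)
      ((hf''cont.mono hsub).intervalIntegrable_of_Icc ht.1) hf'0
  rw [hrepr, show ε = pronyError α N β0 β τ from funext hε]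
  exact abs_intervalIntegral_comp_sub_mul_le ht
    (continuous_pronyError hα1.le N β0 β τ).continuousOn hf''cont

/-- L²-norm error bound for the Prony approximation of the Caputo fractional
derivative when `f'(0) = 0` (Remark 1). -/
theorem prony_error_bound_L2 (T α : ℝ) (hT : 0 < T) (hα0 : 0 < α) (hα1 : α < 1)
    (N : ℕ) (β0 : ℝ) (hβ0 : 0 < β0) (β τ : ℕ → ℝ)
    (hβ : ∀ k ∈ Finset.Icc 1 N, 0 < β k) (hτ : ∀ k ∈ Finset.Icc 1 N, 0 < τ k)
    (f : ℝ → ℝ) (hf : ContDiffOn ℝ 2 f (Set.Icc 0 T))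
    (f' f'' : ℝ → ℝ)
    (hf' : f' = derivWithin f (Set.Icc 0 T))
    (hf'' : f'' = derivWithin f' (Set.Icc 0 T))
    (hf'0 : f' 0 = 0)
    (D : ℝ → ℝ)
    (hD : ∀ t, D t = (1 / Real.Gamma (2 - α)) *
      (t ^ (1 - α) * f' 0 + ∫ s in (0 : ℝ)..t, (t - s) ^ (1 - α) * f'' s))
    (Dhat : ℝ → ℝ)
    (hDhat : ∀ t, Dhat t = β0 * f' t +
      ∑ k ∈ Finset.Icc 1 N, ∫ s in (0 : ℝ)..t, β k * Real.exp ((s - t) / τ k) * f' s)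
    (ε : ℝ → ℝ)
    (hε : ∀ z, ε z = z ^ (1 - α) / Real.Gamma (2 - α) - β0 +
      ∑ k ∈ Finset.Icc 1 N, β k * τ k * (Real.exp (-z / τ k) - 1)) :
    ∀ t ∈ Set.Icc (0 : ℝ) T,
      |D t - Dhat t| ≤
        Real.sqrt (∫ z in (0 : ℝ)..T, (ε z) ^ 2) *
          Real.sqrt (∫ s in (0 : ℝ)..T, (f'' s) ^ 2) :=
  prony_error_bound_L2_general T α hT hα1 N β0 β τ hτ f hf f' f'' hf' hf'' hf'0 D hD Dhat hDhat ε hε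
end
end

section
/- Let β > 0, τ > 0, Δ > 0, let a ≥ 0 and b = a + Δ, and let f : [a,b] → ℝ be three times continuously differentiable. Let e = exp(−Δ/(2τ)). Then | ∫ₐᵇ β exp((s−b)/τ) f′(s) ds − e β ( f(b) − f(a) ) | ≤ (β Δ³ / 24) ( τ^{−2} sup_{[a,b]} |f′| + 2 τ^{−1} sup_{[a,b]} |f″| + (1 + e) sup_{[a,b]} |f‴| ). -/
/-!
Since `∫ₐᵇ f′ = f b - f a`, the error equals `β ∫ₐᵇ k` with `k s = (exp ((s - b) / τ) - e) f′ s`,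
and `e` is the value of the exponential weight at the midpoint of `[a, b]`, so `k` vanishes there.
The error is therefore `β` times the midpoint-rule error of `k`, which is at most
`(b - a)³ / 24 · sup |k″|`; Leibniz's rule for `k″` together with `0 < exp ((s - b) / τ) ≤ 1`
gives the three terms of the bound.
-/

open MeasureTheory intervalIntegral Real Set

theorem ContDiffOn.hasDerivWithinAt_iteratedDerivWithin {𝕜 F : Type*} [NontriviallyNormedField 𝕜]
    [NormedAddCommGroup F] [NormedSpace 𝕜 F] {f : 𝕜 → F} {s : Set 𝕜} {N : WithTop ℕ∞} {n : ℕ}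
    (hf : ContDiffOn 𝕜 N f s) (hn : n < N) (hs : UniqueDiffOn 𝕜 s) {x : 𝕜} (hx : x ∈ s) :
    HasDerivWithinAt (iteratedDerivWithin n f s) (iteratedDerivWithin (n + 1) f s x) s x := by
  rw [iteratedDerivWithin_succ]
  exact (hf.differentiableOn_iteratedDerivWithin hn hs x hx).hasDerivWithinAt

section Interval

variable {a b : ℝ}

theorem integral_eq_sub_of_hasDerivWithinAt_Icc {E : Type*} [NormedAddCommGroup E]
    [NormedSpace ℝ E] [CompleteSpace E] {φ φ' : ℝ → E}
    (hφ : ∀ t ∈ Icc a b, HasDerivWithinAt φ (φ' t) (Icc a b) t)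
    (hφ' : ContinuousOn φ' (Icc a b)) {x y : ℝ} (hx : x ∈ Icc a b) (hy : y ∈ Icc a b) :
    ∫ t in x..y, φ' t = φ y - φ x := by
  have hsub : uIcc x y ⊆ Icc a b := uIcc_subset_Icc hx hy
  refine integral_eq_sub_of_hasDeriv_right
    (fun t ht => (hφ t (hsub ht)).continuousWithinAt.mono hsub) (fun t ht => ?_)
    ((hφ'.mono hsub).intervalIntegrable)
  have htab : t ∈ Ioo a b :=
    ⟨(le_min hx.1 hy.1).trans_lt ht.1, ht.2.trans_le (max_le hx.2 hy.2)⟩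
  exact ((hφ t (Ioo_subset_Icc_self htab)).hasDerivAt (Icc_mem_nhds htab.1 htab.2)).hasDerivWithinAt

variable {h h' h'' : ℝ → ℝ} {D : ℝ}

theorem abs_sub_sub_mul_le_of_abs_deriv2_le
    (hd1 : ∀ t ∈ Icc a b, HasDerivWithinAt h (h' t) (Icc a b) t)
    (hd2 : ∀ t ∈ Icc a b, HasDerivWithinAt h' (h'' t) (Icc a b) t)
    (hD : ∀ t ∈ Icc a b, |h'' t| ≤ D) {m s : ℝ} (hm : m ∈ Icc a b) (hs : s ∈ Icc a b) :
    |h s - h m - h' m * (s - m)| ≤ D * (s - m) ^ 2 / 2 := by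
  have hsub : uIoc m s ⊆ Icc a b := uIoc_subset_uIcc.trans (uIcc_subset_Icc hm hs)
  have hcont : ContinuousOn (fun t => h' t - h' m) (Icc a b) :=
    (HasDerivWithinAt.continuousOn hd2).sub continuousOn_const
  have hslope : ∀ t ∈ Icc a b, ‖h' t - h' m‖ ≤ D * |t - m| ^ 1 := fun t ht => by
    simpa [Real.norm_eq_abs] using Convex.norm_image_sub_le_of_norm_hasDerivWithin_le hd2
      (by simpa [Real.norm_eq_abs] using hD) (convex_Icc a b) hm ht
  have hftc : ∫ t in m..s, (h' t - h' m) = h s - h m - h' m * (s - m) := by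
    rw [integral_eq_sub_of_hasDerivWithinAt_Icc (φ := fun t => h t - h' m * t)
      (fun t ht => by
        simpa using (hd1 t ht).fun_sub ((hasDerivWithinAt_id t _).const_mul (h' m)))
      hcont hm hs]
    ring
  calc |h s - h m - h' m * (s - m)| = ‖∫ t in m..s, (h' t - h' m)‖ := by
        rw [hftc, Real.norm_eq_abs]
    _ ≤ ∫ t in uIoc m s, ‖h' t - h' m‖ := norm_integral_le_integral_norm_uIoc
    _ ≤ ∫ t in uIoc m s, D * |t - m| ^ 1 :=
        setIntegral_mono_on ((hcont.mono (uIcc_subset_Icc hm hs)).intervalIntegrable.def'.norm)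
          (Continuous.integrableOn_uIoc (by fun_prop)) measurableSet_uIoc
          (fun t ht => hslope t (hsub ht))
    _ = D * (s - m) ^ 2 / 2 := by
        rw [MeasureTheory.integral_const_mul, integral_pow_abs_sub_uIoc, sq_abs]
        ring

theorem abs_integral_sub_mul_midpoint_le (hab : a ≤ b)
    (hd1 : ∀ t ∈ Icc a b, HasDerivWithinAt h (h' t) (Icc a b) t)
    (hd2 : ∀ t ∈ Icc a b, HasDerivWithinAt h' (h'' t) (Icc a b) t)
    (hD : ∀ t ∈ Icc a b, |h'' t| ≤ D) :
    |(∫ s in a..b, h s) - (b - a) * h ((a + b) / 2)| ≤ D * (b - a) ^ 3 / 24 := by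
  set m := (a + b) / 2 with hm_def
  have hm : m ∈ Icc a b := ⟨by linarith, by linarith⟩
  have hint : IntervalIntegrable h volume a b :=
    (HasDerivWithinAt.continuousOn hd1).intervalIntegrable_of_Icc hab
  -- the linear term of the Taylor expansion about `m` integrates to zero over `[a, b]`
  have hrem : (∫ s in a..b, h s) - (b - a) * h m
      = ∫ s in a..b, (h s - h m - h' m * (s - m)) := by
    rw [integral_sub (hint.sub intervalIntegrable_const)
        (Continuous.intervalIntegrable (by fun_prop) _ _),
      integral_sub hint intervalIntegrable_const, intervalIntegral.integral_const_mul,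
      integral_comp_sub_right (fun s => s)]
    simp only [intervalIntegral.integral_const, integral_id, smul_eq_mul, hm_def]
    ring
  calc |(∫ s in a..b, h s) - (b - a) * h m|
      = ‖∫ s in a..b, (h s - h m - h' m * (s - m))‖ := by rw [hrem, Real.norm_eq_abs]
    _ ≤ ∫ s in a..b, D * (s - m) ^ 2 / 2 :=
        norm_integral_le_of_norm_le hab (ae_of_all _ fun s hs =>
          abs_sub_sub_mul_le_of_abs_deriv2_le hd1 hd2 hD hm (Ioc_subset_Icc_self hs))
          (Continuous.intervalIntegrable (by fun_prop) _ _)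
    _ = D * (b - a) ^ 3 / 24 := by
        simp only [intervalIntegral.integral_div, intervalIntegral.integral_const_mul,
          integral_comp_sub_right (fun s => s ^ 2), integral_pow, hm_def]
        ring

end Interval

theorem hasDerivAt_exp_sub_div (τ b s : ℝ) :
    HasDerivAt (fun t => exp ((t - b) / τ)) (exp ((s - b) / τ) / τ) s := by
  simpa [div_eq_mul_inv] using (((hasDerivAt_id s).sub_const b).div_const τ).exp

section ExponentialWeight

variable {τ b e : ℝ}

theorem HasDerivWithinAt.exp_sub_div_sub_mul {g : ℝ → ℝ} {g' : ℝ} {I : Set ℝ} {s : ℝ}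
    (hg : HasDerivWithinAt g g' I s) :
    HasDerivWithinAt (fun t => (Real.exp ((t - b) / τ) - e) * g t)
      (Real.exp ((s - b) / τ) / τ * g s + (Real.exp ((s - b) / τ) - e) * g') I s :=
  ((hasDerivAt_exp_sub_div τ b s).sub_const e).hasDerivWithinAt.mul hg

theorem HasDerivWithinAt.deriv_exp_sub_div_sub_mul {g g' : ℝ → ℝ} {g'' : ℝ} {I : Set ℝ} {s : ℝ}
    (hg : HasDerivWithinAt g (g' s) I s) (hg' : HasDerivWithinAt g' g'' I s) :
    HasDerivWithinAt
      (fun t => Real.exp ((t - b) / τ) / τ * g t + (Real.exp ((t - b) / τ) - e) * g' t)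
      (Real.exp ((s - b) / τ) / τ ^ 2 * g s + 2 * (Real.exp ((s - b) / τ) / τ) * g' s
        + (Real.exp ((s - b) / τ) - e) * g'') I s :=
  ((((hasDerivAt_exp_sub_div τ b s).div_const τ).hasDerivWithinAt.mul hg).add
    hg'.exp_sub_div_sub_mul).congr_deriv (by ring)

theorem abs_mul_add_mul_add_mul_le {w x y z C₁ C₂ C₃ : ℝ} (hτ : 0 < τ) (he : 0 ≤ e)
    (hw₀ : 0 ≤ w) (hw₁ : w ≤ 1) (hx : |x| ≤ C₁) (hy : |y| ≤ C₂) (hz : |z| ≤ C₃) :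
    |w / τ ^ 2 * x + 2 * (w / τ) * y + (w - e) * z|
      ≤ 1 / τ ^ 2 * C₁ + 2 / τ * C₂ + (1 + e) * C₃ := by
  have hwe : |w - e| ≤ 1 + e := abs_sub_le_iff.2 ⟨by linarith, by linarith⟩
  calc |w / τ ^ 2 * x + 2 * (w / τ) * y + (w - e) * z|
      ≤ w / τ ^ 2 * |x| + 2 * (w / τ) * |y| + |w - e| * |z| := by
        refine (abs_add_three _ _ _).trans_eq ?_
        rw [abs_mul (w / τ ^ 2), abs_mul (2 * (w / τ)), abs_mul (w - e),
          abs_of_nonneg (by positivity : 0 ≤ w / τ ^ 2),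
          abs_of_nonneg (by positivity : 0 ≤ 2 * (w / τ))]
    _ ≤ 1 / τ ^ 2 * C₁ + 2 * (1 / τ) * C₂ + (1 + e) * C₃ := by gcongr
    _ = 1 / τ ^ 2 * C₁ + 2 / τ * C₂ + (1 + e) * C₃ := by ring

end ExponentialWeight

theorem integral_exp_mul_deriv_sub_eq {f f' : ℝ → ℝ} {a b β τ e : ℝ}
    (hf : ∀ t ∈ Icc a b, HasDerivWithinAt f (f' t) (Icc a b) t)
    (hf' : ContinuousOn f' (Icc a b)) (hab : a ≤ b) :
    (∫ s in a..b, β * exp ((s - b) / τ) * f' s) - e * β * (f b - f a)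
      = β * ∫ s in a..b, (exp ((s - b) / τ) - e) * f' s := by
  have hint : IntervalIntegrable f' volume a b := hf'.intervalIntegrable_of_Icc hab
  have hint' : IntervalIntegrable (fun s => β * exp ((s - b) / τ) * f' s) volume a b :=
    ((Continuous.continuousOn (by fun_prop)).mul hf').intervalIntegrable_of_Icc hab
  rw [← integral_eq_sub_of_hasDerivWithinAt_Icc hf hf' (left_mem_Icc.2 hab) (right_mem_Icc.2 hab),
    ← intervalIntegral.integral_const_mul, ← intervalIntegral.integral_const_mul,
    ← integral_sub hint' (hint.const_mul _)]
  exact integral_congr fun s _ => by ring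

theorem maxwell_step_quadrature_error_general (β τ Δ : ℝ) (hβ : 0 < β) (hτ : 0 < τ) (hΔ : 0 < Δ)
    (a b : ℝ) (hb : b = a + Δ)
    (f : ℝ → ℝ) (hf : ContDiffOn ℝ 3 f (Set.Icc a b))
    (e : ℝ) (he : e = Real.exp (-Δ / (2 * τ))) :
    |(∫ s in a..b, β * Real.exp ((s - b) / τ) * iteratedDerivWithin 1 f (Set.Icc a b) s)
        - e * β * (f b - f a)|
      ≤ β * Δ ^ 3 / 24 *
        ((1 / τ ^ 2) *
            sSup ((fun s => |iteratedDerivWithin 1 f (Set.Icc a b) s|) '' Set.Icc a b)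
          + (2 / τ) *
            sSup ((fun s => |iteratedDerivWithin 2 f (Set.Icc a b) s|) '' Set.Icc a b)
          + (1 + e) *
            sSup ((fun s => |iteratedDerivWithin 3 f (Set.Icc a b) s|) '' Set.Icc a b)) := by
  have hab : a < b := by linarith
  set I := Icc a b
  have hI : UniqueDiffOn ℝ I := uniqueDiffOn_Icc hab
  set f₁ := iteratedDerivWithin 1 f I
  set f₂ := iteratedDerivWithin 2 f I
  set f₃ := iteratedDerivWithin 3 f I
  have hf₀ : ∀ t ∈ I, HasDerivWithinAt f (f₁ t) I t := fun t ht => by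
    simpa only [iteratedDerivWithin_zero, zero_add] using
      hf.hasDerivWithinAt_iteratedDerivWithin (n := 0) (by norm_num) hI ht
  have hf₁ : ∀ t ∈ I, HasDerivWithinAt f₁ (f₂ t) I t := fun t ht =>
    hf.hasDerivWithinAt_iteratedDerivWithin (n := 1) (by norm_num) hI ht
  have hf₂ : ∀ t ∈ I, HasDerivWithinAt f₂ (f₃ t) I t := fun t ht =>
    hf.hasDerivWithinAt_iteratedDerivWithin (n := 2) (by norm_num) hI ht
  have hsup (n : ℕ) (hn : n ≤ 3) (t : ℝ) (ht : t ∈ I) :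
      |iteratedDerivWithin n f I t| ≤ sSup ((fun s => |iteratedDerivWithin n f I s|) '' I) :=
    (hf.continuousOn_iteratedDerivWithin (by exact_mod_cast hn) hI).abs.le_sSup_image_Icc ht
  have hmid : exp (((a + b) / 2 - b) / τ) = e := by
    rw [he, hb]; congr 1; field_simp; ring
  have hD : ∀ t ∈ I, |exp ((t - b) / τ) / τ ^ 2 * f₁ t + 2 * (exp ((t - b) / τ) / τ) * f₂ t
      + (exp ((t - b) / τ) - e) * f₃ t| ≤ _ := fun t ht =>
    abs_mul_add_mul_add_mul_le hτ (he ▸ (exp_pos _).le) (exp_pos _).le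
      (exp_le_one_iff.2 (div_nonpos_of_nonpos_of_nonneg (by linarith [ht.2]) hτ.le))
      (hsup 1 (by norm_num) t ht) (hsup 2 (by norm_num) t ht) (hsup 3 (by norm_num) t ht)
  have hquad := abs_integral_sub_mul_midpoint_le hab.le
    (fun t ht => (hf₁ t ht).exp_sub_div_sub_mul)
    (fun t ht => (hf₁ t ht).deriv_exp_sub_div_sub_mul (hf₂ t ht)) hD
  rw [hmid, sub_self, zero_mul, mul_zero, sub_zero] at hquad
  rw [integral_exp_mul_deriv_sub_eq hf₀ (HasDerivWithinAt.continuousOn hf₁) hab.le, abs_mul,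
    abs_of_pos hβ]
  calc β * |∫ s in a..b, (exp ((s - b) / τ) - e) * f₁ s|
      ≤ β * (_ * (b - a) ^ 3 / 24) := by gcongr
    _ = _ := by rw [hb]; ring

/-- One-step quadrature error bound for the exponential-midpoint discrete
update of a Maxwell element. -/
theorem maxwell_step_quadrature_error (β τ Δ : ℝ) (hβ : 0 < β) (hτ : 0 < τ) (hΔ : 0 < Δ)
    (a b : ℝ) (ha : 0 ≤ a) (hb : b = a + Δ)
    (f : ℝ → ℝ) (hf : ContDiffOn ℝ 3 f (Set.Icc a b))
    (e : ℝ) (he : e = Real.exp (-Δ / (2 * τ))) :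
    |(∫ s in a..b, β * Real.exp ((s - b) / τ) * iteratedDerivWithin 1 f (Set.Icc a b) s)
        - e * β * (f b - f a)|
      ≤ β * Δ ^ 3 / 24 *
        ((1 / τ ^ 2) *
            sSup ((fun s => |iteratedDerivWithin 1 f (Set.Icc a b) s|) '' Set.Icc a b)
          + (2 / τ) *
            sSup ((fun s => |iteratedDerivWithin 2 f (Set.Icc a b) s|) '' Set.Icc a b)
          + (1 + e) *
            sSup ((fun s => |iteratedDerivWithin 3 f (Set.Icc a b) s|) '' Set.Icc a b)) :=
  maxwell_step_quadrature_error_general β τ Δ hβ hτ hΔ a b hb f hf e he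
end
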